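/- The tetrahedron E_{(5,5)} = conv{(0,-2,1),(1,0,-1),(1,1,1),(-2,1,-1)} contains exactly five lattice points (its four vertices and the origin), and its sublattice index equals 5. -/
import Mathlib


/-- embedding of integer points into `ℝ³` -/
noncomputable def rr (v : Fin 3 → ℤ) : Fin 3 → ℝ := fun i => (v i : ℝ)

/-- The subgroup of `ℤ³` generated by all differences of lattice points;
its index is the sublattice index. -/
def diffLat (A : Set (Fin 3 → ℤ)) : AddSubgroup (Fin 3 → ℤ) :=
  AddSubgroup.closure {v | ∃ x ∈ A, ∃ y ∈ A, v = x - y}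

/-- The tetrahedron `E_{(5,5)}`. -/
noncomputable def E55 : Set (Fin 3 → ℝ) :=
  convexHull ℝ {rr ![0, -2, 1], rr ![1, 0, -1], rr ![1, 1, 1], rr ![-2, 1, -1]}

private lemma halfspace_bound (a b c : ℝ) (r : ℝ)
    (h1 : a * (0:ℝ) + b * (-2) + c * 1 ≥ r)
    (h2 : a * 1 + b * 0 + c * (-1) ≥ r)
    (h3 : a * 1 + b * 1 + c * 1 ≥ r)
    (h4 : a * (-2) + b * 1 + c * (-1) ≥ r)
    {x : Fin 3 → ℝ} (hx : x ∈ E55) :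
    a * x 0 + b * x 1 + c * x 2 ≥ r := by
  have hlin : IsLinearMap ℝ (fun w : Fin 3 → ℝ => a * w 0 + b * w 1 + c * w 2) := by
    constructor
    · intro p q; simp [Pi.add_apply]; ring
    · intro t p; simp [Pi.smul_apply, smul_eq_mul]; ring
  have hconv : Convex ℝ {w : Fin 3 → ℝ | r ≤ a * w 0 + b * w 1 + c * w 2} :=
    convex_halfSpace_ge hlin r
  have hsub : ({rr ![0, -2, 1], rr ![1, 0, -1], rr ![1, 1, 1], rr ![-2, 1, -1]} :
      Set (Fin 3 → ℝ)) ⊆ {w | r ≤ a * w 0 + b * w 1 + c * w 2} := by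
    rintro w hw
    simp only [Set.mem_insert_iff, Set.mem_singleton_iff] at hw
    rcases hw with rfl | rfl | rfl | rfl <;>
      simp only [rr, Set.mem_setOf_eq, Matrix.cons_val_zero, Matrix.cons_val_one,
        Matrix.cons_val_two, Matrix.tail_cons, Matrix.head_cons] <;> push_cast <;> linarith
  exact convexHull_min hsub hconv hx

private lemma origin_mem : rr ![0, 0, 0] ∈ E55 := by
  have hc := convex_convexHull ℝ
    ({rr ![0, -2, 1], rr ![1, 0, -1], rr ![1, 1, 1], rr ![-2, 1, -1]} : Set (Fin 3 → ℝ))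
  have h1 : rr ![0, -2, 1] ∈ E55 := subset_convexHull ℝ _ (by simp)
  have h2 : rr ![1, 0, -1] ∈ E55 := subset_convexHull ℝ _ (by simp)
  have h3 : rr ![1, 1, 1] ∈ E55 := subset_convexHull ℝ _ (by simp)
  have h4 : rr ![-2, 1, -1] ∈ E55 := subset_convexHull ℝ _ (by simp)
  have m1 : (1/2 : ℝ) • rr ![0, -2, 1] + (1/2 : ℝ) • rr ![1, 0, -1] ∈ E55 :=
    hc h1 h2 (by norm_num) (by norm_num) (by norm_num)
  have m2 : (1/2 : ℝ) • rr ![1, 1, 1] + (1/2 : ℝ) • rr ![-2, 1, -1] ∈ E55 :=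
    hc h3 h4 (by norm_num) (by norm_num) (by norm_num)
  have m0 := hc m1 m2 (by norm_num) (by norm_num) (by norm_num : (1/2:ℝ)+(1/2:ℝ)=1)
  have heq : rr ![0, 0, 0] =
      (1/2 : ℝ) • ((1/2 : ℝ) • rr ![0, -2, 1] + (1/2 : ℝ) • rr ![1, 0, -1]) +
      (1/2 : ℝ) • ((1/2 : ℝ) • rr ![1, 1, 1] + (1/2 : ℝ) • rr ![-2, 1, -1]) := by
    funext i
    fin_cases i <;>
      simp [rr, Pi.add_apply, Pi.smul_apply, smul_eq_mul,
        Matrix.cons_val_zero, Matrix.cons_val_one, Matrix.head_cons] <;> norm_num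
  rw [heq]; exact m0

private lemma vec3_eq_iff (v : Fin 3 → ℤ) (a b c : ℤ) :
    v = ![a, b, c] ↔ v 0 = a ∧ v 1 = b ∧ v 2 = c := by
  constructor
  · rintro rfl
    refine ⟨rfl, rfl, rfl⟩
  · rintro ⟨h0, h1, h2⟩
    funext i
    fin_cases i <;> simpa

private def phi : (Fin 3 → ℤ) →+ ZMod 5 where
  toFun v := ((v 0 + 3 * v 1 + v 2 : ℤ) : ZMod 5)
  map_zero' := by simp
  map_add' x y := by
    simp only [Pi.add_apply]
    push_cast
    ring

private lemma zero_vec : (![0, 0, 0] : Fin 3 → ℤ) = 0 := by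
  funext i; fin_cases i <;> rfl

theorem stmt12 :
    {v : Fin 3 → ℤ | rr v ∈ E55} =
      {![0, -2, 1], ![1, 0, -1], ![1, 1, 1], ![-2, 1, -1], ![0, 0, 0]} ∧
    {v : Fin 3 → ℤ | rr v ∈ E55}.ncard = 5 ∧
    (diffLat {v : Fin 3 → ℤ | rr v ∈ E55}).index = 5 := by
  have key : {v : Fin 3 → ℤ | rr v ∈ E55} =
      {![0, -2, 1], ![1, 0, -1], ![1, 1, 1], ![-2, 1, -1], ![0, 0, 0]} := by
    ext v
    simp only [Set.mem_setOf_eq, Set.mem_insert_iff, Set.mem_singleton_iff]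
    constructor
    · intro hv
      have i1 := halfspace_bound (-6) 2 (-1) (-5)
        (by norm_num) (by norm_num) (by norm_num) (by norm_num) hv
      have i2 := halfspace_bound 2 6 7 (-5)
        (by norm_num) (by norm_num) (by norm_num) (by norm_num) hv
      have i3 := halfspace_bound 6 (-2) (-9) (-5)
        (by norm_num) (by norm_num) (by norm_num) (by norm_num) hv
      have i4 := halfspace_bound (-2) (-6) 3 (-5)
        (by norm_num) (by norm_num) (by norm_num) (by norm_num) hv
      simp only [rr] at i1 i2 i3 i4
      have j1 : -6 * v 0 + 2 * v 1 + -1 * v 2 ≥ -5 := by exact_mod_cast i1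
      have j2 : 2 * v 0 + 6 * v 1 + 7 * v 2 ≥ -5 := by exact_mod_cast i2
      have j3 : 6 * v 0 + -2 * v 1 + -9 * v 2 ≥ -5 := by exact_mod_cast i3
      have j4 : -2 * v 0 + -6 * v 1 + 3 * v 2 ≥ -5 := by exact_mod_cast i4
      simp only [vec3_eq_iff]
      have hx1 : -2 ≤ v 0 := by omega
      have hx2 : v 0 ≤ 1 := by omega
      have hy1 : -2 ≤ v 1 := by omega
      have hy2 : v 1 ≤ 1 := by omega
      have hz1 : -1 ≤ v 2 := by omega
      have hz2 : v 2 ≤ 1 := by omega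
      interval_cases h0 : v 0 <;> interval_cases h1 : v 1 <;>
        interval_cases h2 : v 2 <;> omega
    · rintro (rfl | rfl | rfl | rfl | rfl)
      · exact subset_convexHull ℝ _ (by simp)
      · exact subset_convexHull ℝ _ (by simp)
      · exact subset_convexHull ℝ _ (by simp)
      · exact subset_convexHull ℝ _ (by simp)
      · exact origin_mem
  refine ⟨key, ?_, ?_⟩
  · rw [key]
    rw [show ({![0, -2, 1], ![1, 0, -1], ![1, 1, 1], ![-2, 1, -1], ![0, 0, 0]} :
        Set (Fin 3 → ℤ)) =
        (↑({![0, -2, 1], ![1, 0, -1], ![1, 1, 1], ![-2, 1, -1], ![0, 0, 0]} :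
          Finset (Fin 3 → ℤ)) : Set (Fin 3 → ℤ)) by simp]
    rw [Set.ncard_coe_finset]
    decide
  · rw [key]
    set S : Set (Fin 3 → ℤ) :=
      {![0, -2, 1], ![1, 0, -1], ![1, 1, 1], ![-2, 1, -1], ![0, 0, 0]} with hS
    have hker : diffLat S = phi.ker := by
      apply le_antisymm
      · rw [diffLat, AddSubgroup.closure_le]
        rintro v ⟨x, hx, y, hy, rfl⟩
        simp only [hS, Set.mem_insert_iff, Set.mem_singleton_iff] at hx hy
        have hx0 : phi x = 0 := by rcases hx with rfl|rfl|rfl|rfl|rfl <;> decide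
        have hy0 : phi y = 0 := by rcases hy with rfl|rfl|rfl|rfl|rfl <;> decide
        have : phi (x - y) = 0 := by rw [map_sub, hx0, hy0, sub_zero]
        simpa [AddMonoidHom.mem_ker] using this
      · intro v hv
        have hvz : ((v 0 + 3 * v 1 + v 2 : ℤ) : ZMod 5) = 0 := hv
        have h5 : (5 : ℤ) ∣ v 0 + 3 * v 1 + v 2 :=
          (ZMod.intCast_zmod_eq_zero_iff_dvd _ 5).mp hvz
        obtain ⟨k, hk⟩ := h5
        have hmem : ∀ p ∈ S, p ∈ diffLat S := by
          intro p hp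
          exact AddSubgroup.subset_closure ⟨p, hp, ![0, 0, 0], by simp [hS], by
            rw [zero_vec, sub_zero]⟩
        have hg1 : (![0, -2, 1] : Fin 3 → ℤ) ∈ diffLat S := hmem _ (by simp [hS])
        have hg2 : (![1, 0, -1] : Fin 3 → ℤ) ∈ diffLat S := hmem _ (by simp [hS])
        have hg3 : (![1, 1, 1] : Fin 3 → ℤ) ∈ diffLat S := hmem _ (by simp [hS])
        have hv' : v = (-(v 1) + k) • (![0, -2, 1] : Fin 3 → ℤ)
            + (-2 * v 1 - v 2 + 3 * k) • (![1, 0, -1] : Fin 3 → ℤ)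
            + (-(v 1) + 2 * k) • (![1, 1, 1] : Fin 3 → ℤ) := by
          funext i
          fin_cases i <;> simp <;> omega
        rw [hv']
        exact add_mem (add_mem (AddSubgroup.zsmul_mem _ hg1 _)
          (AddSubgroup.zsmul_mem _ hg2 _)) (AddSubgroup.zsmul_mem _ hg3 _)
    rw [hker, AddSubgroup.index_ker]
    have hsurj : Function.Surjective phi := by
      intro z
      refine ⟨![(z.val : ℤ), 0, 0], ?_⟩
      show ((((![(z.val : ℤ), 0, 0] : Fin 3 → ℤ) 0)
        + 3 * _ + _ : ℤ) : ZMod 5) = z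
      simp [ZMod.natCast_val, ZMod.cast_id]
    rw [AddMonoidHom.range_eq_top.mpr hsurj]
    have : Nat.card (⊤ : AddSubgroup (ZMod 5)) = Nat.card (ZMod 5) :=
      Nat.card_congr AddSubgroup.topEquiv.toEquiv
    rw [this]
    simp [Nat.card_eq_fintype_card]
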